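/- arXiv:1706.01551 — 7 statements merged into one kernel-verified Lean document; each statement's English description precedes it below -/
import Mathlib

section
/- Let G be a Hausdorff topological group, Γ a dense subgroup of G, α a group automorphism of Γ, and f : G → G a homeomorphism satisfying f(ρ(γ)·x) = ρ(α(γ))·f(x) for all γ ∈ Γ and x ∈ G. Then the map β : G → G defined by β(g) = f(g)·f(1)⁻¹ is a group automorphism of G and a homeomorphism, β(ρ(γ)) = ρ(α(γ)) for every γ ∈ Γ, and f(g) = β(g)·f(1) for every g ∈ G. (Proposition II.1.4(3): an element φ of Aut(Γ⋉G) is characterized by α_φ and φ₀(1).) -/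
/-- Proposition II.1.4(3).
Let `G` be a Hausdorff topological group, `Γ` a dense subgroup of `G` (with inclusion `ρ`),
`α` a group automorphism of `Γ`, and `f : G → G` a homeomorphism satisfying
`f (ρ γ * x) = ρ (α γ) * f x` for all `γ ∈ Γ` and `x ∈ G`.  Then the map
`β : G → G`, `β g = f g * (f 1)⁻¹`, is a group automorphism of `G` and a homeomorphism,
`β (ρ γ) = ρ (α γ)` for every `γ ∈ Γ`, and `f g = β g * f 1` for every `g ∈ G`. -/
theorem stmt3 {G : Type*} [Group G] [TopologicalSpace G] [IsTopologicalGroup G] [T2Space G]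
    (Γ : Subgroup G) (hΓ : Dense (Γ : Set G))
    (α : Γ ≃* Γ) (f : G ≃ₜ G)
    (hf : ∀ (γ : Γ) (x : G), f ((γ : G) * x) = ((α γ : Γ) : G) * f x) :
    ∃ e : G ≃ₜ G,
      (∀ g : G, e g = f g * (f 1)⁻¹) ∧
      (∀ x y : G, e (x * y) = e x * e y) ∧
      (∀ γ : Γ, e (γ : G) = ((α γ : Γ) : G)) ∧
      (∀ g : G, f g = e g * f 1) := by
  refine ⟨f.trans (Homeomorph.mulRight (f 1)⁻¹), fun g => rfl, ?_, ?_, ?_⟩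
  · intro x y
    have key : ∀ x ∈ (Γ : Set G),
        (fun x => f (x * y) * (f 1)⁻¹) x = (fun x => (f x * (f 1)⁻¹) * (f y * (f 1)⁻¹)) x := by
      intro x hx
      have h1 := hf ⟨x, hx⟩ 1
      rw [mul_one] at h1
      have h2 := hf ⟨x, hx⟩ y
      simp only [h2, h1]
      group
    have := Continuous.ext_on hΓ
      (((f.continuous.comp (continuous_id.mul continuous_const)).mul continuous_const))
      (((f.continuous.mul continuous_const).mul continuous_const)) key
    exact congrFun this x
  · intro γ
    have h1 := hf γ 1
    rw [mul_one] at h1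
    show f (γ : G) * (f 1)⁻¹ = _
    rw [h1, mul_inv_cancel_right]
  · intro g
    show f g = f g * (f 1)⁻¹ * f 1
    rw [inv_mul_cancel_right]
end

section
/- The map μ : Γ → G ⋊ A defined by μ(γ) = (ρ(γ)⁻¹, c_γ) is an injective group homomorphism, and its image μ(Γ) is a normal subgroup of G ⋊ A. (Theorem II.1.7(2).) -/
/-- The group `A = Aut(ρ)` of automorphisms of the topological group `G` preserving the
dense subgroup `Γ`: group automorphisms `β` of `G` that are homeomorphisms
(`β` and `β⁻¹` continuous) with `β(Γ) = Γ`, as a subgroup of `MulAut G`. -/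
def autRho (G : Type*) [Group G] [TopologicalSpace G] (Γ : Subgroup G) :
    Subgroup (MulAut G) where
  carrier := {β | Continuous β ∧ Continuous β.symm ∧ ⇑β '' (Γ : Set G) = (Γ : Set G)}
  one_mem' := ⟨continuous_id, continuous_id, Set.image_id _⟩
  mul_mem' := by
    rintro a b ⟨ha1, ha2, ha3⟩ ⟨hb1, hb2, hb3⟩
    refine ⟨?_, ?_, ?_⟩
    · show Continuous (⇑a ∘ ⇑b)
      exact ha1.comp hb1
    · show Continuous (⇑b.symm ∘ ⇑a.symm)
      exact hb2.comp ha2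
    · show (⇑a ∘ ⇑b) '' (Γ : Set G) = (Γ : Set G)
      rw [Set.image_comp, hb3, ha3]
  inv_mem' := by
    rintro a ⟨ha1, ha2, ha3⟩
    refine ⟨ha2, ha1, ?_⟩
    show ⇑a.symm '' (Γ : Set G) = (Γ : Set G)
    conv_lhs => rw [← ha3]
    rw [← Set.image_comp]
    simp

lemma conj_mem_autRho {G : Type*} [Group G] [TopologicalSpace G] [IsTopologicalGroup G]
    (Γ : Subgroup G) (γ : Γ) : MulAut.conj (γ : G) ∈ autRho G Γ := by
  refine ⟨?_, ?_, ?_⟩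
  · show Continuous fun x : G => (γ : G) * x * (γ : G)⁻¹
    exact (continuous_const.mul continuous_id).mul continuous_const
  · show Continuous fun x : G => (γ : G)⁻¹ * x * (γ : G)
    exact (continuous_const.mul continuous_id).mul continuous_const
  · ext x
    constructor
    · rintro ⟨y, hy, rfl⟩
      exact Γ.mul_mem (Γ.mul_mem γ.2 hy) (Γ.inv_mem γ.2)
    · intro hx
      exact ⟨(γ : G)⁻¹ * x * γ,
        Γ.mul_mem (Γ.mul_mem (Γ.inv_mem γ.2) hx) γ.2, by
        simp [MulAut.conj_apply, mul_assoc]⟩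

/-- Theorem II.1.7(2).
The map `μ : Γ → G ⋊ A` defined by `μ γ = (ρ(γ)⁻¹, c_γ)` (where `c_γ` is conjugation
by `γ` and `A = Aut(ρ)` acts on `G` by evaluation) is an injective group homomorphism,
and its image `μ(Γ)` is a normal subgroup of `G ⋊ A`. -/
theorem stmt5 {G : Type*} [Group G] [TopologicalSpace G] [IsTopologicalGroup G] [T2Space G]
    (Γ : Subgroup G) (hΓ : Dense (Γ : Set G)) :
    ∃ μ : Γ →* (G ⋊[(autRho G Γ).subtype] (autRho G Γ)),
      (∀ γ : Γ, (μ γ).left = (γ : G)⁻¹ ∧ ((μ γ).right : MulAut G) = MulAut.conj (γ : G)) ∧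
      Function.Injective μ ∧
      (μ.range).Normal := by
  refine ⟨{ toFun := fun γ => ⟨(γ : G)⁻¹, ⟨MulAut.conj (γ : G), conj_mem_autRho Γ γ⟩⟩
            map_one' := ?_
            map_mul' := ?_ }, ?_, ?_, ?_⟩
  · ext <;> simp
  · intro a b
    refine SemidirectProduct.ext ?_ ?_
    · simp [SemidirectProduct.mul_left, MulAut.conj_apply, mul_assoc]
    · refine Subtype.ext ?_
      show MulAut.conj ((a : G) * b) = MulAut.conj (a : G) * MulAut.conj (b : G)
      simp
  · intro γ; exact ⟨rfl, rfl⟩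
  · intro a b h
    have h1 : ((a : G))⁻¹ = ((b : G))⁻¹ := congrArg SemidirectProduct.left h
    exact Subtype.ext (inv_injective h1)
  · constructor
    rintro n ⟨γ, rfl⟩ g
    have hmem : (g.right : MulAut G) (γ : G) ∈ Γ := by
      have h3 := g.right.2.2.2
      have : (g.right : MulAut G) (γ : G) ∈ (Γ : Set G) := by
        rw [← h3]; exact Set.mem_image_of_mem _ γ.2
      exact this
    refine ⟨⟨(g.right : MulAut G) (γ : G), hmem⟩, ?_⟩
    refine SemidirectProduct.ext ?_ ?_
    · show ((g.right : MulAut G) (γ : G))⁻¹ = _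
      simp [SemidirectProduct.mul_left, SemidirectProduct.mul_right,
        SemidirectProduct.inv_left, SemidirectProduct.inv_right,
        MulAut.conj_apply, mul_assoc]
    · refine Subtype.ext ?_
      show MulAut.conj ((g.right : MulAut G) (γ : G)) =
        (g.right : MulAut G) * MulAut.conj (γ : G) * (g.right : MulAut G)⁻¹
      ext x
      simp [MulAut.mul_apply, MulAut.conj_apply, mul_assoc]
end

section
/- Assume that Γ₀ = Γ ∩ Z(G) (the center of Γ) is a discrete subgroup of G, i.e. the subspace topology on ρ(Γ₀) ⊆ G is discrete. Then the set μ(Γ) = {(ρ(γ)⁻¹, c_γ) : γ ∈ Γ} is a discrete subset of G × A, where G carries its given topology and A carries the discrete topology. (Theorem III.1.2: if ρ(Γ₀) is discrete in G then μ(Γ) is a discrete subgroup of Aut(Γ⋉G).) -/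
/-- Theorem III.1.2.
Assume that `Γ₀ = Γ ∩ Z(G)` (the center of `Γ`) is a discrete subgroup of `G`, i.e. the
subspace topology on `ρ(Γ₀) ⊆ G` is discrete.  Then the set
`μ(Γ) = {(ρ(γ)⁻¹, c_γ) : γ ∈ Γ}` is a discrete subset of `G × A`, where `G` carries its
given topology and `A = Aut(ρ)` carries the discrete topology (this product being the
underlying topological space of the paper's Lie group `Aut(Γ ⋉ G) = Aut(ρ) ⋉ G`). -/
theorem stmt8 {G : Type*} [Group G] [TopologicalSpace G] [IsTopologicalGroup G] [T2Space G]
    (Γ : Subgroup G) (hΓ : Dense (Γ : Set G))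
    (hdisc : DiscreteTopology (Γ ⊓ Subgroup.center G : Subgroup G)) :
    letI : TopologicalSpace (autRho G Γ) := ⊥
    DiscreteTopology
      {p : G × (autRho G Γ) |
        ∃ γ : Γ, p.1 = (γ : G)⁻¹ ∧ ((p.2 : autRho G Γ) : MulAut G) = MulAut.conj (γ : G)} := by
  letI : TopologicalSpace (autRho G Γ) := ⊥
  haveI : DiscreteTopology (autRho G Γ) := ⟨rfl⟩
  rw [discreteTopology_iff_isOpen_singleton]
  rintro ⟨⟨g, β⟩, γ, hg, hβ⟩
  replace hg : g = (γ : G)⁻¹ := hg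
  replace hβ : (β : MulAut G) = MulAut.conj (γ : G) := hβ
  obtain ⟨V, hVopen, hV⟩ : ∃ V : Set G, IsOpen V ∧
      Subtype.val ⁻¹' V = ({1} : Set (Γ ⊓ Subgroup.center G : Subgroup G)) := by
    have h1 : IsOpen ({1} : Set (Γ ⊓ Subgroup.center G : Subgroup G)) := isOpen_discrete _
    rwa [isOpen_induced_iff] at h1
  have h1V : (1 : G) ∈ V := by
    have h : (1 : (Γ ⊓ Subgroup.center G : Subgroup G)) ∈ Subtype.val ⁻¹' V := by
      rw [hV]; exact rfl
    simpa using h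
  set U : Set G := (fun x => g * x⁻¹) '' V with hU
  have hUopen : IsOpen U :=
    (((Homeomorph.inv G).trans (Homeomorph.mulLeft g)).isOpenMap) V hVopen
  rw [isOpen_induced_iff]
  refine ⟨U ×ˢ ({β} : Set (autRho G Γ)), hUopen.prod (isOpen_discrete _), ?_⟩
  ext ⟨⟨g', β'⟩, γ', hg', hβ'⟩
  replace hg' : g' = (γ' : G)⁻¹ := hg'
  replace hβ' : (β' : MulAut G) = MulAut.conj (γ' : G) := hβ'
  simp only [Set.mem_preimage, Set.mem_prod, Set.mem_singleton_iff, Set.mem_setOf_eq]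
  constructor
  · rintro ⟨⟨v, hvV, hveq⟩, hββ'⟩
    have hconj : MulAut.conj (γ' : G) = MulAut.conj (γ : G) := by
      rw [← hβ', ← hβ, hββ']
    have hvz : v = (γ' : G) * (γ : G)⁻¹ := by
      have : g * v⁻¹ = g' := hveq
      rw [hg, hg'] at this
      have := congrArg (fun x => (γ : G) * x) this
      simp only [mul_inv_cancel_left] at this
      calc v = ((γ : G) * (γ' : G)⁻¹)⁻¹ := by rw [← this]; simp
        _ = (γ' : G) * (γ : G)⁻¹ := by group
    have hzmem : v ∈ (Γ ⊓ Subgroup.center G : Subgroup G) := by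
      rw [hvz]
      refine ⟨Γ.mul_mem γ'.2 (Γ.inv_mem γ.2), Subgroup.mem_center_iff.2 fun x => ?_⟩
      have hc := DFunLike.congr_fun hconj ((γ : G)⁻¹ * x * (γ : G))
      simp only [MulAut.conj_apply] at hc
      have hc' : (γ' : G) * ((γ : G)⁻¹ * x * (γ : G)) * (γ' : G)⁻¹ = x := by
        rw [hc]; group
      calc x * ((γ' : G) * (γ : G)⁻¹)
          = ((γ' : G) * ((γ : G)⁻¹ * x * (γ : G)) * (γ' : G)⁻¹) * ((γ' : G) * (γ : G)⁻¹) := by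
            rw [hc']
        _ = (γ' : G) * (γ : G)⁻¹ * x := by group
    have : (⟨v, hzmem⟩ : (Γ ⊓ Subgroup.center G : Subgroup G)) ∈ Subtype.val ⁻¹' V := hvV
    rw [hV, Set.mem_singleton_iff] at this
    have hv1 : v = 1 := congrArg Subtype.val this
    have hγγ' : (γ' : G) = (γ : G) := by
      have := hvz.symm.trans hv1
      calc (γ' : G) = ((γ' : G) * (γ : G)⁻¹) * (γ : G) := by group
        _ = (γ : G) := by rw [this]; simp
    refine Subtype.ext (Prod.ext ?_ hββ')
    simp only
    rw [hg', hg, hγγ']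
  · rintro h
    have h1 : g' = g := congrArg (fun q => q.val.1) h
    have h2 : β' = β := congrArg (fun q => q.val.2) h
    exact ⟨⟨1, h1V, by simp [h1]⟩, h2⟩
end

section
/- Let Int(ρ) ≤ A be the image of the homomorphism γ ↦ c_γ and let Z₀ = ρ(Γ ∩ Z(G)). The projection G ⋊ A → A, (g, β) ↦ β, induces a surjective group homomorphism q from the quotient group (G ⋊ A)/μ(Γ) onto the quotient group A/Int(ρ), and the kernel of q is isomorphic as a group to G/Z₀. (The exactness statement in Theorem III.1.3: the group H = Aut(Γ⋉G)/μ(Γ) = Out(Γ⋉G) is an extension of G/ρ(Γ₀) by Out(ρ).) -/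
/-- A subgroup contained in the center is normal; in particular `Z₀ = Γ ⊓ Z(G)` is a
normal subgroup of `G`, so that the quotient group `G ⧸ (Γ ⊓ Z(G))` makes sense. -/
instance instInfCenterNormal (G : Type*) [Group G] (Γ : Subgroup G) :
    (Γ ⊓ Subgroup.center G).Normal := by
  constructor
  intro n hn g
  have h2 := (Subgroup.mem_inf.mp hn).2
  have hc : g * n * g⁻¹ = n := by
    rw [Subgroup.mem_center_iff.mp h2 g]; group
  rw [hc]; exact hn

/-- the exactness statement in Theorem III.1.3.
Let `Int(ρ) ≤ A = Aut(ρ)` be the image of `γ ↦ c_γ` and `Z₀ = ρ(Γ ∩ Z(G))`.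
The projection `G ⋊ A → A`, `(g, β) ↦ β`, induces a surjective group homomorphism `q`
from the quotient group `(G ⋊ A)/μ(Γ)` (the paper's `H = Out(Γ ⋉ G)`) onto the quotient
group `A/Int(ρ)` (the paper's `Out(ρ)`), and the kernel of `q` is isomorphic as a group
to `G/Z₀`.  (Here `μ γ = (ρ(γ)⁻¹, c_γ)` has normal image, and `Int(ρ)` is normal in `A`.) -/
theorem stmt10 {G : Type*} [Group G] [TopologicalSpace G] [IsTopologicalGroup G] [T2Space G]
    (Γ : Subgroup G) (hΓ : Dense (Γ : Set G)) :
    ∀ μ : Γ →* (G ⋊[(autRho G Γ).subtype] (autRho G Γ)),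
      (∀ γ : Γ, (μ γ).left = (γ : G)⁻¹ ∧ ((μ γ).right : MulAut G) = MulAut.conj (γ : G)) →
      ∀ (h₁ : (μ.range).Normal)
        (h₂ : ((Subgroup.map (MulAut.conj) Γ).subgroupOf (autRho G Γ)).Normal),
      letI := h₁
      letI := h₂
      ∃ q : ((G ⋊[(autRho G Γ).subtype] (autRho G Γ)) ⧸ μ.range) →*
          ((autRho G Γ) ⧸ (Subgroup.map (MulAut.conj) Γ).subgroupOf (autRho G Γ)),
        (∀ p : G ⋊[(autRho G Γ).subtype] (autRho G Γ),
          q (QuotientGroup.mk p) = QuotientGroup.mk p.right) ∧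
        Function.Surjective q ∧
        Nonempty (q.ker ≃* (G ⧸ (Γ ⊓ Subgroup.center G : Subgroup G))) := by
  intro μ hμ h₁ h₂
  classical
  have hconj_center : ∀ x : G, MulAut.conj x = 1 ↔ x ∈ Subgroup.center G := by
    intro x
    constructor
    · intro h
      rw [Subgroup.mem_center_iff]
      intro g
      have := MulEquiv.ext_iff.mp h g
      simp only [MulAut.conj_apply, MulAut.one_apply] at this
      calc g * x = x * g * x⁻¹ * x := by rw [this]
        _ = x * g := by group
    · intro h
      ext g
      simp only [MulAut.conj_apply, MulAut.one_apply]
      rw [Subgroup.mem_center_iff] at h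
      rw [← h g]; group
  have hker0 : ∀ x ∈ μ.range,
      ((QuotientGroup.mk' ((Subgroup.map (MulAut.conj) Γ).subgroupOf (autRho G Γ))).comp
        (SemidirectProduct.rightHom)) x = 1 := by
    rintro x ⟨γ, rfl⟩
    simp only [MonoidHom.comp_apply, QuotientGroup.mk'_apply,
      SemidirectProduct.rightHom_eq_right]
    rw [QuotientGroup.eq_one_iff, Subgroup.mem_subgroupOf]
    exact ⟨(γ : G), γ.2, ((hμ γ).2).symm⟩
  refine ⟨QuotientGroup.lift _ _ hker0, ?_, ?_, ?_⟩
  · intro p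
    rfl
  · intro y
    obtain ⟨β, rfl⟩ := QuotientGroup.mk_surjective y
    exact ⟨QuotientGroup.mk (SemidirectProduct.inr β), rfl⟩
  · set q : ((G ⋊[(autRho G Γ).subtype] (autRho G Γ)) ⧸ μ.range) →*
        ((autRho G Γ) ⧸ (Subgroup.map (MulAut.conj) Γ).subgroupOf (autRho G Γ)) :=
      QuotientGroup.lift _ _ hker0 with hq
    have hmem : ∀ g : G,
        ((QuotientGroup.mk' μ.range).comp (SemidirectProduct.inl)) g ∈ q.ker := by
      intro g
      rw [MonoidHom.mem_ker]
      show QuotientGroup.mk ((SemidirectProduct.inl g :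
        G ⋊[(autRho G Γ).subtype] (autRho G Γ)).right) = 1
      simp
    set φ : G →* q.ker :=
      ((QuotientGroup.mk' μ.range).comp (SemidirectProduct.inl)).codRestrict q.ker hmem
      with hφ
    have hφs : Function.Surjective φ := by
      rintro ⟨x, hx⟩
      obtain ⟨p, rfl⟩ := QuotientGroup.mk_surjective x
      have hx' : QuotientGroup.mk p.right = (1 :
          (autRho G Γ) ⧸ (Subgroup.map (MulAut.conj) Γ).subgroupOf (autRho G Γ)) := hx
      rw [QuotientGroup.eq_one_iff, Subgroup.mem_subgroupOf] at hx'
      obtain ⟨γ, hγ, hc⟩ := hx'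
      refine ⟨p.left * γ, ?_⟩
      apply Subtype.ext
      show QuotientGroup.mk (SemidirectProduct.inl (p.left * γ)) = QuotientGroup.mk p
      have key : p = SemidirectProduct.inl (p.left * γ) * μ ⟨γ, hγ⟩ := by
        have hr : (μ ⟨γ, hγ⟩).right = p.right := by
          apply Subtype.ext
          rw [(hμ ⟨γ, hγ⟩).2]
          exact hc
        refine SemidirectProduct.ext ?_ ?_
        · simp [(hμ ⟨γ, hγ⟩).1]
        · simp [hr]
      rw [QuotientGroup.eq]
      exact ⟨⟨γ, hγ⟩, eq_inv_mul_iff_mul_eq.mpr key.symm⟩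
    have hkerφ : φ.ker = Γ ⊓ Subgroup.center G := by
      ext g
      constructor
      · intro hg
        have hg' : ((QuotientGroup.mk' μ.range).comp (SemidirectProduct.inl)) g = 1 := by
          have := congrArg Subtype.val (MonoidHom.mem_ker.mp hg)
          exact this
        rw [MonoidHom.comp_apply, QuotientGroup.mk'_apply, QuotientGroup.eq_one_iff] at hg'
        obtain ⟨γ, hγ⟩ := hg'
        have hl : (μ γ).left = g := by rw [hγ]; rfl
        have hr : (μ γ).right = 1 := by rw [hγ]; rfl
        have hgeq : g = (γ : G)⁻¹ := by rw [← hl, (hμ γ).1]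
        have hcen : (γ : G) ∈ Subgroup.center G := by
          rw [← hconj_center]
          rw [← (hμ γ).2, hr]
          rfl
        refine Subgroup.mem_inf.mpr ⟨?_, ?_⟩
        · rw [hgeq]; exact Γ.inv_mem γ.2
        · rw [hgeq]; exact (Subgroup.center G).inv_mem hcen
      · intro hg
        obtain ⟨hgΓ, hgZ⟩ := Subgroup.mem_inf.mp hg
        rw [MonoidHom.mem_ker]
        apply Subtype.ext
        show ((QuotientGroup.mk' μ.range).comp (SemidirectProduct.inl)) g = 1
        rw [MonoidHom.comp_apply, QuotientGroup.mk'_apply, QuotientGroup.eq_one_iff]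
        refine ⟨⟨g⁻¹, Γ.inv_mem hgΓ⟩, ?_⟩
        refine SemidirectProduct.ext ?_ ?_
        · simp [(hμ ⟨g⁻¹, Γ.inv_mem hgΓ⟩).1]
        · apply Subtype.ext
          show (((μ ⟨g⁻¹, Γ.inv_mem hgΓ⟩).right : MulAut G)) = _
          rw [(hμ ⟨g⁻¹, Γ.inv_mem hgΓ⟩).2]
          simp only [SemidirectProduct.right_inl, Subgroup.coe_one]
          rw [hconj_center]
          exact (Subgroup.center G).inv_mem hgZ
      
    exact ⟨((QuotientGroup.quotientKerEquivOfSurjective φ hφs).symm.trans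
      (QuotientGroup.quotientMulEquivOfEq hkerφ))⟩
end

section
/- Let α be a real number that is transcendental over ℚ and let Γ = {m + n·α : m, n ∈ ℤ}, an additive subgroup of ℝ. If λ is a real number such that λ•Γ = Γ, then λ = 1 or λ = -1. (Proposition III.2.2(a): if the dense subgroup Γ of ℝ contains a transcendental number, Aut(ρ) = {1, -1}; stated here in the supported case Γ = ℤ ⊕ ℤα.) -/
lemma quad_indep (α : ℝ) (hα : Transcendental ℚ α) (a b c : ℤ)
    (h : (a : ℝ) + (b : ℝ) * α + (c : ℝ) * α ^ 2 = 0) : a = 0 ∧ b = 0 ∧ c = 0 := by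
  set q : Polynomial ℚ := Polynomial.C (a : ℚ) + Polynomial.C (b : ℚ) * Polynomial.X
      + Polynomial.C (c : ℚ) * Polynomial.X ^ 2 with hq
  have hev : Polynomial.aeval α q = 0 := by
    simp only [hq, map_add, map_mul, map_pow, Polynomial.aeval_C, Polynomial.aeval_X]
    push_cast
    convert h using 2 <;> push_cast [map_intCast] <;> ring
  have hq0 : q = 0 := by
    by_contra hne
    exact hα ⟨q, hne, hev⟩
  have h0 : q.coeff 0 = (a : ℚ) := by simp only [hq, Polynomial.coeff_add, Polynomial.coeff_C_mul, Polynomial.coeff_C,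
      Polynomial.coeff_X, Polynomial.coeff_X_pow]; norm_num
  have h1 : q.coeff 1 = (b : ℚ) := by simp only [hq, Polynomial.coeff_add, Polynomial.coeff_C_mul, Polynomial.coeff_C,
      Polynomial.coeff_X, Polynomial.coeff_X_pow]; norm_num
  have h2 : q.coeff 2 = (c : ℚ) := by simp only [hq, Polynomial.coeff_add, Polynomial.coeff_C_mul, Polynomial.coeff_C,
      Polynomial.coeff_X, Polynomial.coeff_X_pow]; norm_num
  rw [hq0] at h0 h1 h2
  simp only [Polynomial.coeff_zero] at h0 h1 h2
  exact ⟨by exact_mod_cast h0.symm, by exact_mod_cast h1.symm, by exact_mod_cast h2.symm⟩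

lemma lin_indep (α : ℝ) (hα : Transcendental ℚ α) (a b : ℤ)
    (h : (a : ℝ) + (b : ℝ) * α = 0) : a = 0 ∧ b = 0 := by
  have := quad_indep α hα a b 0 (by push_cast; linarith)
  exact ⟨this.1, this.2.1⟩

/-- Proposition III.2.2(a), in the case `Γ = ℤ ⊕ ℤα`.
Let `α` be a real number that is transcendental over `ℚ` and let
`Γ = {m + n·α : m, n ∈ ℤ}`, an additive subgroup of `ℝ`.  If `λ` is a real number
such that `λ•Γ = Γ` (where `λ•Γ = {λ·x : x ∈ Γ}`), then `λ = 1` or `λ = -1`. -/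
theorem stmt11 (α : ℝ) (hα : Transcendental ℚ α) (lam : ℝ)
    (h : (fun x : ℝ => lam * x) '' {x : ℝ | ∃ m n : ℤ, x = (m : ℝ) + (n : ℝ) * α}
      = {x : ℝ | ∃ m n : ℤ, x = (m : ℝ) + (n : ℝ) * α}) :
    lam = 1 ∨ lam = -1 := by
  -- λ·1 ∈ Γ
  have h1 : lam ∈ {x : ℝ | ∃ m n : ℤ, x = (m : ℝ) + (n : ℝ) * α} := by
    rw [← h]
    exact ⟨1, ⟨1, 0, by simp⟩, by simp⟩
  -- λ·α ∈ Γ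
  have h2 : lam * α ∈ {x : ℝ | ∃ m n : ℤ, x = (m : ℝ) + (n : ℝ) * α} := by
    rw [← h]
    exact ⟨α, ⟨0, 1, by simp⟩, rfl⟩
  obtain ⟨a, b, hab⟩ := h1
  obtain ⟨c, d, hcd⟩ := h2
  -- (a + bα)α = c + dα  ⇒ b = 0, a = d, c = 0
  have key : (-c : ℝ) + ((a - d : ℤ) : ℝ) * α + (b : ℝ) * α ^ 2 = 0 := by
    have : (a + (b:ℝ) * α) * α = (c:ℝ) + (d:ℝ) * α := by rw [← hab]; exact hcd
    push_cast
    nlinarith [this]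
  obtain ⟨hc, had, hb⟩ := quad_indep α hα (-c) (a - d) b (by exact_mod_cast key)
  have hb' : (b : ℝ) = 0 := by exact_mod_cast hb
  have hlam : lam = (a : ℝ) := by rw [hab, hb']; ring
  -- 1 ∈ λ•Γ
  have h3 : (1 : ℝ) ∈ (fun x : ℝ => lam * x) '' {x : ℝ | ∃ m n : ℤ, x = (m : ℝ) + (n : ℝ) * α} := by
    rw [h]; exact ⟨1, 0, by simp⟩
  obtain ⟨x, ⟨m, n, hmn⟩, hx⟩ := h3
  -- 1 = a·m + a·n·α
  have heq : ((a * m - 1 : ℤ) : ℝ) + ((a * n : ℤ) : ℝ) * α = 0 := by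
    have : lam * x = 1 := hx
    rw [hlam, hmn] at this
    push_cast
    nlinarith [this]
  obtain ⟨ham, _⟩ := lin_indep α hα (a * m - 1) (a * n) heq
  have : a = 1 ∨ a = -1 := Int.isUnit_iff.mp (IsUnit.of_mul_eq_one (a := a) m (by omega))
  rcases this with h' | h' <;> [left; right] <;> rw [hlam, h'] <;> norm_num
end

section
/- Let Γ be a finitely generated additive subgroup of ℝ that is free of rank N with N ≥ 1, and let λ be a nonzero real number with λ•Γ = Γ. Then λ is an algebraic integer and so is λ⁻¹; that is, both λ and λ⁻¹ are integral over ℤ. (Part of Proposition III.2.2(b): every element of Λ = Aut(ρ) is a unit of the ring of integers of a number field.) -/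
/-- part of Proposition III.2.2(b).
Let `Γ` be a finitely generated additive subgroup of `ℝ` that is free of rank `N ≥ 1`
(witnessed by a `ℤ`-basis indexed by `Fin N`), and let `λ` be a nonzero real number with
`λ•Γ = Γ`.  Then `λ` is an algebraic integer and so is `λ⁻¹`; that is, both `λ` and
`λ⁻¹` are integral over `ℤ`. -/
theorem stmt12 (Γ : AddSubgroup ℝ) (N : ℕ) (hN : 1 ≤ N) (b : Module.Basis (Fin N) ℤ Γ)
    (lam : ℝ) (hlam : lam ≠ 0)
    (h : (fun x : ℝ => lam * x) '' (Γ : Set ℝ) = (Γ : Set ℝ)) :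
    IsIntegral ℤ lam ∧ IsIntegral ℤ lam⁻¹ := by
  set M : Submodule ℤ ℝ := AddSubgroup.toIntSubmodule Γ with hM
  have hMne : M ≠ ⊥ := by
    intro hbot
    have h0 : (b ⟨0, hN⟩ : Γ) ≠ 0 := b.ne_zero _
    apply h0
    have : ((b ⟨0, hN⟩ : Γ) : ℝ) ∈ M := (b ⟨0, hN⟩).2
    rw [hbot, Submodule.mem_bot] at this
    exact Subtype.ext this
  have hMfg : M.FG := by
    have : Module.Finite ℤ M := Module.Finite.of_basis b
    exact Module.Finite.iff_fg.mp this
  constructor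
  · refine isIntegral_of_smul_mem_submodule M hMne hMfg lam ?_
    intro n hn
    have : lam * n ∈ (Γ : Set ℝ) := by
      rw [← h]; exact ⟨n, hn, rfl⟩
    simpa [smul_eq_mul] using (show lam * n ∈ M from this)
  · refine isIntegral_of_smul_mem_submodule M hMne hMfg lam⁻¹ ?_
    intro n hn
    have hn' : n ∈ (Γ : Set ℝ) := hn
    rw [← h] at hn'
    obtain ⟨m, hm, hmn⟩ := hn'
    have : lam⁻¹ * n = m := by subst hmn; field_simp
    simpa [smul_eq_mul, this] using (show m ∈ M from hm)
end

section
/- Let Γ be a finitely generated additive subgroup of ℝ that is free of rank N, where N is a prime number, and let λ be a real number with λ•Γ = Γ, λ ≠ 1 and λ ≠ -1. Then λ is algebraic over ℚ and the field ℚ(λ) has degree exactly N over ℚ. (Corollary III.2.3: if the rank N of Γ is prime, then either Aut(ρ) = {1, -1} or its elements generate number fields of degree N.) -/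
open IntermediateField Module

set_option synthInstance.maxHeartbeats 1000000
set_option maxHeartbeats 2000000

/-- Corollary III.2.3.
Let `Γ` be a finitely generated additive subgroup of `ℝ` that is free of rank `N`,
where `N` is a prime number (freeness witnessed by a `ℤ`-basis indexed by `Fin N`),
and let `λ` be a real number with `λ•Γ = Γ`, `λ ≠ 1` and `λ ≠ -1`.  Then `λ` is
algebraic over `ℚ` and the field `ℚ(λ)` has degree exactly `N` over `ℚ`. -/
theorem stmt14 (Γ : AddSubgroup ℝ) (N : ℕ) (hN : N.Prime) (b : Module.Basis (Fin N) ℤ Γ)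
    (lam : ℝ)
    (h : (fun x : ℝ => lam * x) '' (Γ : Set ℝ) = (Γ : Set ℝ))
    (h1 : lam ≠ 1) (h2 : lam ≠ -1) :
    IsAlgebraic ℚ lam ∧
    Module.finrank ℚ (IntermediateField.adjoin ℚ {lam}) = N := by
  -- stability of Γ under multiplication by `lam`
  have hsub : ∀ x ∈ Γ, lam * x ∈ Γ := by
    intro x hx
    have : lam * x ∈ (fun x : ℝ => lam * x) '' (Γ : Set ℝ) := ⟨x, hx, rfl⟩
    rwa [h] at this
  have hNpos : 0 < N := hN.pos
  have hb0 : ((b ⟨0, hNpos⟩ : Γ) : ℝ) ∈ Γ := (b ⟨0, hNpos⟩).2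
  -- `lam ≠ 0`
  have hlam0 : lam ≠ 0 := by
    rintro rfl
    have hbne := b.ne_zero ⟨0, hNpos⟩
    have : ((b ⟨0, hNpos⟩ : Γ) : ℝ) ∈ (fun x : ℝ => (0:ℝ) * x) '' (Γ : Set ℝ) := by
      rw [h]; exact hb0
    obtain ⟨y, -, hy⟩ := this
    simp only [zero_mul] at hy
    exact hbne (Subtype.ext hy.symm)
  -- stability of Γ under multiplication by `lam⁻¹`
  have hsubinv : ∀ x ∈ Γ, lam⁻¹ * x ∈ Γ := by
    intro x hx
    have : x ∈ (fun x : ℝ => lam * x) '' (Γ : Set ℝ) := by rw [h]; exact hx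
    obtain ⟨y, hy, hyx⟩ := this
    have : lam⁻¹ * x = y := by field_simp [← hyx]; exact hyx.symm
    rwa [this]
  -- `lam` and `lam⁻¹` are algebraic integers
  set M : Submodule ℤ ℝ := AddSubgroup.toIntSubmodule Γ with hM
  have hMne : M ≠ ⊥ := by
    intro hbot
    apply b.ne_zero ⟨0, hNpos⟩
    have : ((b ⟨0, hNpos⟩ : Γ) : ℝ) ∈ M := hb0
    rw [hbot, Submodule.mem_bot] at this
    exact Subtype.ext this
  have hMfg : M.FG := by
    have : Module.Finite ℤ Γ := Module.Finite.of_basis b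
    exact (Module.Finite.iff_fg (N := M)).mp this
  have hint : IsIntegral ℤ lam :=
    isIntegral_of_smul_mem_submodule M hMne hMfg lam (fun n hn => hsub n hn)
  have hintinv : IsIntegral ℤ lam⁻¹ :=
    isIntegral_of_smul_mem_submodule M hMne hMfg lam⁻¹ (fun n hn => hsubinv n hn)
  have hintQ : IsIntegral ℚ lam := hint.tower_top
  have halg : IsAlgebraic ℚ lam := hintQ.isAlgebraic
  -- the field `K = ℚ(lam)`
  set K : IntermediateField ℚ ℝ := IntermediateField.adjoin ℚ {lam} with hK
  have hfd : FiniteDimensional ℚ K := IntermediateField.adjoin.finiteDimensional hintQ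
  -- the ℚ-span of Γ
  set W : Submodule ℚ ℝ := Submodule.span ℚ (Γ : Set ℝ) with hW
  have hWlam : ∀ w ∈ W, lam * w ∈ W := by
    intro w hw
    induction hw using Submodule.span_induction with
    | mem x hx => exact Submodule.subset_span (hsub x hx)
    | zero => simp
    | add x y _ _ hx hy => rw [mul_add]; exact W.add_mem hx hy
    | smul q x _ hx => rw [Algebra.mul_smul_comm]; exact W.smul_mem q hx
  have key : ∀ x ∈ Algebra.adjoin ℚ ({lam} : Set ℝ), ∀ w ∈ W, x * w ∈ W := by
    intro x hx
    induction hx using Algebra.adjoin_induction with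
    | mem x hx => rw [Set.mem_singleton_iff] at hx; subst hx; exact hWlam
    | algebraMap q => intro w hw; simpa [Algebra.smul_def] using W.smul_mem q hw
    | add x y _ _ hx hy => intro w hw; rw [add_mul]; exact W.add_mem (hx w hw) (hy w hw)
    | mul x y _ _ hx hy => intro w hw; rw [mul_assoc]; exact hx _ (hy w hw)
  have hWK : ∀ k : K, ∀ w ∈ W, (k : ℝ) * w ∈ W := by
    intro k w hw
    have hmem : (k : ℝ) ∈ (IntermediateField.adjoin ℚ {lam}).toSubalgebra := k.2
    rw [IntermediateField.adjoin_simple_toSubalgebra_of_isAlgebraic hintQ.isAlgebraic] at hmem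
    exact key _ hmem w hw
  -- `W` as a `K`-vector space
  let W' : Submodule K ℝ :=
    { carrier := (W : Set ℝ)
      add_mem' := fun ha hb => W.add_mem ha hb
      zero_mem' := W.zero_mem
      smul_mem' := fun k w hw => hWK k w hw }
  have hres : W'.restrictScalars ℚ = W := by ext x; exact Iff.rfl
  have e2 : (W'.restrictScalars ℚ) ≃ₗ[ℚ] W' :=
    (Submodule.restrictScalarsEquiv ℚ K ℝ W').restrictScalars ℚ
  have e3 : finrank ℚ W' = finrank ℚ W := by rw [← e2.finrank_eq, hres]
  have tower : finrank ℚ K * finrank K W' = finrank ℚ W' :=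
    Module.finrank_mul_finrank ℚ K W'
  -- `finrank ℚ W = N`
  set c : Fin N → ℝ := fun i => ((b i : Γ) : ℝ) with hc
  have hliZ : LinearIndependent ℤ c := by
    have := b.linearIndependent
    exact this.map' (AddSubgroup.toIntSubmodule Γ).subtype (Submodule.ker_subtype _)
  have hliQ : LinearIndependent ℚ c := (LinearIndependent.iff_fractionRing ℤ ℚ).mp hliZ
  have hspan : Submodule.span ℚ (Set.range c) = W := by
    apply le_antisymm
    · rw [Submodule.span_le]
      rintro - ⟨i, rfl⟩
      exact Submodule.subset_span (b i).2
    · rw [hW, Submodule.span_le]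
      intro x hx
      have hx' : (⟨x, hx⟩ : Γ) ∈ Submodule.span ℤ (Set.range b) := by
        rw [b.span_eq]; trivial
      have hmap : x ∈ Submodule.span ℤ (Set.range c) := by
        have := Submodule.mem_map_of_mem (f := (AddSubgroup.toIntSubmodule Γ).subtype) hx'
        erw [Submodule.map_span] at this
        have hrange : (AddSubgroup.toIntSubmodule Γ).subtype '' Set.range b = Set.range c := by
          ext y; simp [hc]
          constructor
          · rintro ⟨_, i, hi⟩; exact ⟨i, congrArg Subtype.val hi⟩
          · rintro ⟨i, rfl⟩; exact ⟨(b i).2, i, rfl⟩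
        erw [hrange] at this; exact this
      have hle : Submodule.span ℤ (Set.range c) ≤
          (Submodule.span ℚ (Set.range c)).restrictScalars ℤ := by
        rw [Submodule.span_le]
        exact Submodule.subset_span
      exact hle hmap
  have hrank : finrank ℚ W = N := by
    rw [← hspan, finrank_span_eq_card hliQ, Fintype.card_fin]
  have hdvd : finrank ℚ K ∣ N := ⟨finrank K W', by rw [← hrank, ← e3, ← tower]⟩
  -- `finrank ℚ K ≠ 1`
  have hne1 : finrank ℚ K ≠ 1 := by
    intro hone
    rw [hK, IntermediateField.finrank_eq_one_iff] at hone
    have hmem : lam ∈ IntermediateField.adjoin ℚ ({lam} : Set ℝ) :=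
      IntermediateField.mem_adjoin_simple_self ℚ lam
    rw [hone, IntermediateField.mem_bot] at hmem
    obtain ⟨q, hq⟩ := hmem
    have hq0 : q ≠ 0 := by rintro rfl; apply hlam0; rw [← hq]; simp
    have hqi : IsIntegral ℤ q := by
      rwa [← isIntegral_algebraMap_iff (algebraMap ℚ ℝ).injective, hq]
    have hqii : IsIntegral ℤ q⁻¹ := by
      rw [← isIntegral_algebraMap_iff (algebraMap ℚ ℝ).injective, map_inv₀, hq]
      exact hintinv
    obtain ⟨m, hm⟩ := IsIntegrallyClosed.isIntegral_iff.mp hqi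
    obtain ⟨m', hm'⟩ := IsIntegrallyClosed.isIntegral_iff.mp hqii
    have hmm' : m * m' = 1 := by
      have : ((m * m' : ℤ) : ℚ) = ((1 : ℤ) : ℚ) := by
        push_cast
        rw [show ((m:ℚ)) = q from hm, show ((m':ℚ)) = q⁻¹ from hm']
        field_simp
      exact_mod_cast this
    have hu : IsUnit m := IsUnit.of_mul_eq_one m' hmm'
    rcases Int.isUnit_iff.mp hu with rfl | rfl
    · apply h1; rw [← hq, ← hm]; simp
    · apply h2; rw [← hq, ← hm]; simp
  rcases (hN.eq_one_or_self_of_dvd _ hdvd) with hcase | hcase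
  · exact absurd hcase hne1
  · exact ⟨halg, hcase⟩
end
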